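/- arXiv:2312.11878 — 6 statements merged into one kernel-verified Lean document; each statement's English description precedes it below -/
import Mathlib

section
/- Let r ≥ 0, let X be a finite quasimetric space, and let φ : X → X be a short map with φ ∼_r id_X. Then there exists a natural number n ≥ 1 such that φⁿ∘φⁿ = φⁿ, and for any such n the image φⁿ(X), with the induced quasimetric, is an r-deformation retract of X. -/
/-!
Iterates of `φ` stay short and `r`-homotopic to the identity, and in the finite monoid of
self-maps of `X` some power `φⁿ` (`n ≥ 1`) is idempotent. An idempotent short map that is
`r`-homotopic to the identity is a retraction onto its image, so it exhibits that image as
an `r`-deformation retract.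
-/

open scoped ENNReal

class QuasiMetric (X : Type*) where
  qdist : X → X → ℝ≥0∞
  qdist_triangle : ∀ x y z : X, qdist x z ≤ qdist x y + qdist y z
  qdist_eq_zero_iff : ∀ x y : X, qdist x y = 0 ↔ x = y

open QuasiMetric

instance {X : Type*} [QuasiMetric X] (A : Set X) : QuasiMetric A where
  qdist a b := qdist a.1 b.1
  qdist_triangle a b c := qdist_triangle a.1 b.1 c.1
  qdist_eq_zero_iff a b := (qdist_eq_zero_iff a.1 b.1).trans Subtype.coe_inj

/-- A map of quasimetric spaces is short (1-Lipschitz). -/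
def IsShort {X Y : Type*} [QuasiMetric X] [QuasiMetric Y] (f : X → Y) : Prop :=
  ∀ x x' : X, qdist (f x) (f x') ≤ qdist x x'

/-- The distance `d(f,g) = sup_x d(f x, g x)` on maps. -/
noncomputable def mapDist {X Y : Type*} [QuasiMetric X] [QuasiMetric Y] (f g : X → Y) : ℝ≥0∞ :=
  ⨆ x : X, qdist (f x) (g x)

/-- Two short maps are `r`-homotopic if they are connected by a chain of short maps
in which each consecutive pair is at distance `≤ r` in one direction or the other. -/
def MapHomotopic {X Y : Type*} [QuasiMetric X] [QuasiMetric Y] (r : ℝ) (f g : X → Y) : Prop :=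
  Relation.ReflTransGen
    (fun u v : X → Y => IsShort u ∧ IsShort v ∧
      (mapDist u v ≤ ENNReal.ofReal r ∨ mapDist v u ≤ ENNReal.ofReal r)) f g

/-- `A ⊆ X` is an `r`-deformation retract of `X`. -/
def IsDefRetract {X : Type*} [QuasiMetric X] (r : ℝ) (A : Set X) : Prop :=
  ∃ ρ : X → A, IsShort ρ ∧ (∀ a : A, ρ (a : X) = a) ∧
    MapHomotopic r (fun x => (ρ x : X)) id

/-- A quasimetric space is `r`-minimal if it has no proper `r`-deformation retract. -/
def RMinimal (r : ℝ) (X : Type*) [QuasiMetric X] : Prop :=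
  ∀ A : Set X, IsDefRetract r A → A = Set.univ

/-- A distance-preserving bijection. -/
def IsIsometry {X Y : Type*} [QuasiMetric X] [QuasiMetric Y] (f : X → Y) : Prop :=
  Function.Bijective f ∧ ∀ x x' : X, qdist (f x) (f x') = qdist x x'

/-- Two quasimetric spaces are `r`-homotopy equivalent. -/
def RHomotopyEquivalent (r : ℝ) (X Y : Type*) [QuasiMetric X] [QuasiMetric Y] : Prop :=
  ∃ f : X → Y, ∃ g : Y → X, IsShort f ∧ IsShort g ∧
    MapHomotopic r (g ∘ f) id ∧ MapHomotopic r (f ∘ g) id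

theorem exists_pow_isIdempotentElem {M : Type*} [Monoid M] [Finite M] (a : M) :
    ∃ n, 1 ≤ n ∧ IsIdempotentElem (a ^ n) := by
  obtain ⟨m, l, hml, heq⟩ := Set.finite_univ.exists_lt_map_eq_of_forall_mem
    (f := fun n : ℕ => a ^ n) fun _ => Set.mem_univ _
  obtain ⟨p, rfl⟩ := Nat.exists_eq_add_of_lt hml
  have hperiodic : ∀ k, a ^ (m + k * (p + 1)) = a ^ m := by
    intro k
    induction k with
    | zero => simp
    | succ k ih =>
      calc a ^ (m + (k + 1) * (p + 1)) = a ^ (m + p + 1) * a ^ (k * (p + 1)) := by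
            rw [← pow_add]; ring_nf
        _ = a ^ m := by rw [← heq, ← pow_add, ih]
  -- a multiple of the period `p + 1` that is at least the preperiod `m`
  refine ⟨(m + 1) * (p + 1), Nat.mul_pos m.succ_pos p.succ_pos, ?_⟩
  obtain ⟨i, hi⟩ : ∃ i, (m + 1) * (p + 1) = m + i := ⟨m * p + p + 1, by ring⟩
  calc a ^ ((m + 1) * (p + 1)) * a ^ ((m + 1) * (p + 1))
      = a ^ (m + (m + 1) * (p + 1)) * a ^ i := by rw [← pow_add, ← pow_add, hi]; ring_nf
    _ = a ^ ((m + 1) * (p + 1)) := by rw [hperiodic, ← pow_add, hi]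

theorem Function.exists_iterate_comp_self {X : Type*} [Finite X] (f : X → X) :
    ∃ n, 1 ≤ n ∧ f^[n] ∘ f^[n] = f^[n] :=
  have : Finite (Function.End X) := inferInstanceAs (Finite (X → X))
  exists_pow_isIdempotentElem (M := Function.End X) f

section Short

variable {X Y Z : Type*} [QuasiMetric X] [QuasiMetric Y] [QuasiMetric Z]

theorem IsShort.comp {f : Y → Z} {g : X → Y} (hf : IsShort f) (hg : IsShort g) :
    IsShort (f ∘ g) :=
  fun x x' => (hf _ _).trans (hg x x')

theorem IsShort.iterate {f : X → X} (hf : IsShort f) (n : ℕ) : IsShort f^[n] := by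
  induction n with
  | zero => exact fun _ _ => le_rfl
  | succ n ih => rw [Function.iterate_succ]; exact ih.comp hf

theorem mapDist_comp_left_le {f : Y → Z} (hf : IsShort f) (u v : X → Y) :
    mapDist (f ∘ u) (f ∘ v) ≤ mapDist u v :=
  iSup_mono fun _ => hf _ _

theorem MapHomotopic.comp_left {r : ℝ} {f : Y → Z} {u v : X → Y} (hf : IsShort f)
    (h : MapHomotopic r u v) : MapHomotopic r (f ∘ u) (f ∘ v) := by
  refine Relation.ReflTransGen.lift (f ∘ ·) ?_ _ _ h
  rintro a b ⟨ha, hb, hab | hba⟩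
  · exact ⟨hf.comp ha, hf.comp hb, .inl ((mapDist_comp_left_le hf a b).trans hab)⟩
  · exact ⟨hf.comp ha, hf.comp hb, .inr ((mapDist_comp_left_le hf b a).trans hba)⟩

theorem MapHomotopic.iterate_id {r : ℝ} {φ : X → X} (hφ : IsShort φ)
    (h : MapHomotopic r φ id) (n : ℕ) : MapHomotopic r φ^[n] id := by
  induction n with
  | zero => exact .refl
  | succ n ih =>
    rw [Function.iterate_succ]
    exact (h.comp_left (hφ.iterate n)).trans ih

theorem isDefRetract_range {r : ℝ} {f : X → X} (hf : IsShort f) (hidem : f ∘ f = f)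
    (h : MapHomotopic r f id) : IsDefRetract r (Set.range f) := by
  refine ⟨Set.rangeFactorization f, hf, ?_, h⟩
  rintro ⟨_, x, rfl⟩
  exact Subtype.ext (congrFun hidem x)

end Short

theorem stmt_1_general {X : Type*} [QuasiMetric X] [Finite X] (r : ℝ)
    (φ : X → X) (hφ : IsShort φ) (h : MapHomotopic r φ id) :
    (∃ n : ℕ, 1 ≤ n ∧ φ^[n] ∘ φ^[n] = φ^[n]) ∧
      ∀ n : ℕ, 1 ≤ n → φ^[n] ∘ φ^[n] = φ^[n] → IsDefRetract r (Set.range φ^[n]) :=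
  ⟨Function.exists_iterate_comp_self φ, fun n _ hidem =>
    isDefRetract_range (hφ.iterate n) hidem (h.iterate_id hφ n)⟩

theorem stmt_1 {X : Type*} [QuasiMetric X] [Finite X] (r : ℝ) (hr : 0 ≤ r)
    (φ : X → X) (hφ : IsShort φ) (h : MapHomotopic r φ id) :
    (∃ n : ℕ, 1 ≤ n ∧ φ^[n] ∘ φ^[n] = φ^[n]) ∧
      ∀ n : ℕ, 1 ≤ n → φ^[n] ∘ φ^[n] = φ^[n] → IsDefRetract r (Set.range φ^[n]) :=
  stmt_1_general r φ hφ h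
end

section
/- Let r ≥ 0 and let X be a finite quasimetric space. The following are equivalent: (1) X is r-minimal; (2) every short map φ : X → X with φ ∼_r id_X is a distance-preserving bijection of X onto itself; (3) every short map φ : X → X such that d(id_X,φ) ≤ r or d(φ,id_X) ≤ r is a distance-preserving bijection of X onto itself. -/
open scoped ENNReal

open QuasiMetric

section Helpers
variable {X : Type*} [QuasiMetric X]

lemma isShort_id : IsShort (id : X → X) := fun _ _ => le_refl _

lemma isShort_comp {f g : X → X} (hf : IsShort f) (hg : IsShort g) : IsShort (f ∘ g) :=
  fun x x' => (hf _ _).trans (hg x x')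

lemma isShort_iterate {f : X → X} (hf : IsShort f) : ∀ n, IsShort (f^[n])
  | 0 => isShort_id
  | n + 1 => by
      rw [Function.iterate_succ]
      exact isShort_comp (isShort_iterate hf n) hf

lemma mapHomotopic_symm {r : ℝ} {f g : X → X} (h : MapHomotopic r f g) :
    MapHomotopic r g f := by
  induction h with
  | refl => exact .refl
  | tail _ h₂ ih => exact .head ⟨h₂.2.1, h₂.1, h₂.2.2.symm⟩ ih

lemma mapDist_comp_right_le (u v w : X → X) : mapDist (u ∘ w) (v ∘ w) ≤ mapDist u v :=
  iSup_le fun x => le_iSup (fun y => qdist (u y) (v y)) (w x)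

lemma mapHomotopic_comp_right {r : ℝ} {f g w : X → X} (hw : IsShort w)
    (h : MapHomotopic r f g) : MapHomotopic r (f ∘ w) (g ∘ w) := by
  induction h with
  | refl => exact .refl
  | tail _ h₂ ih =>
    refine ih.tail ⟨isShort_comp h₂.1 hw, isShort_comp h₂.2.1 hw, ?_⟩
    rcases h₂.2.2 with h | h
    · exact Or.inl ((mapDist_comp_right_le _ _ _).trans h)
    · exact Or.inr ((mapDist_comp_right_le _ _ _).trans h)

lemma isometry_step {r : ℝ}
    (h3 : ∀ φ : X → X, IsShort φ →
      (mapDist id φ ≤ ENNReal.ofReal r ∨ mapDist φ id ≤ ENNReal.ofReal r) → IsIsometry φ)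
    {f g : X → X} (hf : IsIsometry f)
    (hR : IsShort f ∧ IsShort g ∧
      (mapDist f g ≤ ENNReal.ofReal r ∨ mapDist g f ≤ ENNReal.ofReal r)) :
    IsIsometry g := by
  obtain ⟨hbij, hiso⟩ := hf
  let e := Equiv.ofBijective f hbij
  have hfe : ∀ x, f (e.symm x) = x := fun x => e.apply_symm_apply x
  have hinv_short : IsShort (fun x => e.symm x) := fun x x' => by
    have h := hiso (e.symm x) (e.symm x')
    rw [hfe, hfe] at h
    exact le_of_eq h.symm
  have hcomp_short : IsShort (g ∘ fun x => e.symm x) := isShort_comp hR.2.1 hinv_short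
  have key : ∀ u v : X → X, mapDist (u ∘ fun x => e.symm x) (v ∘ fun x => e.symm x) = mapDist u v :=
    fun u v => e.symm.iSup_comp (g := fun y => qdist (u y) (v y))
  have hid : (id : X → X) = f ∘ fun x => e.symm x := funext fun x => (hfe x).symm
  have hh : IsIsometry (g ∘ fun x => e.symm x) := by
    refine h3 _ hcomp_short ?_
    rcases hR.2.2 with h | h
    · exact Or.inl (by rw [hid, key]; exact h)
    · exact Or.inr (by rw [hid, key]; exact h)
  have hg : g = (g ∘ fun x => e.symm x) ∘ f := funext fun x => by
    simp only [Function.comp_apply]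
    congr 1
    exact (e.symm_apply_apply x).symm
  rw [hg]
  exact ⟨hh.1.comp hbij, fun x x' => (hh.2 (f x) (f x')).trans (hiso x x')⟩

end Helpers

theorem stmt_2 {X : Type*} [QuasiMetric X] [Finite X] (r : ℝ) (hr : 0 ≤ r) :
    List.TFAE
      [RMinimal r X,
       ∀ φ : X → X, IsShort φ → MapHomotopic r φ id → IsIsometry φ,
       ∀ φ : X → X, IsShort φ →
         (mapDist id φ ≤ ENNReal.ofReal r ∨ mapDist φ id ≤ ENNReal.ofReal r) →
         IsIsometry φ] := by
  tfae_have 1 → 2 := by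
    intro h1 φ hφ hhom
    obtain ⟨m, n, hmn, heq⟩ : ∃ m n : ℕ, m < n ∧ φ^[m] = φ^[n] := by
      obtain ⟨a, b, hab, h⟩ := Finite.exists_ne_map_eq_of_infinite (fun k : ℕ => φ^[k])
      rcases lt_or_gt_of_ne hab with h' | h'
      · exact ⟨a, b, h', h⟩
      · exact ⟨b, a, h', h.symm⟩
    set p := n - m with hp
    have hp1 : 1 ≤ p := by omega
    have hper : ∀ k, φ^[m + k * p] = φ^[m] := by
      intro k
      induction k with
      | zero => simp
      | succ k ih =>
        have : m + (k + 1) * p = p + (m + k * p) := by ring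
        rw [this, Function.iterate_add, ih, ← Function.iterate_add]
        have : p + m = n := by omega
        rw [this, ← heq]
    have hgen : ∀ j k, φ^[j + (m + k * p)] = φ^[j + m] := fun j k => by
      rw [Function.iterate_add, hper, ← Function.iterate_add]
    set N := (m + 1) * p with hN
    have hNm : m ≤ N := le_trans (by omega : m ≤ (m + 1) * 1) (Nat.mul_le_mul_left _ hp1)
    have hN1 : 1 ≤ N := Nat.mul_pos (by omega) hp1
    set π := φ^[N] with hπ
    have hidem : π ∘ π = π := by
      rw [hπ, ← Function.iterate_add]
      have h1 : N + N = (N - m) + (m + (m + 1) * p) := by omega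
      have h2 : (N - m) + m = N := by omega
      rw [h1, hgen, h2]
    have hπshort : IsShort π := isShort_iterate hφ N
    have hiterhom : ∀ k, MapHomotopic r (φ^[k]) id := by
      intro k
      induction k with
      | zero => exact .refl
      | succ k ih =>
        rw [Function.iterate_succ']
        exact (mapHomotopic_comp_right (isShort_iterate hφ k) hhom).trans ih
    have hsurj : Function.Surjective π := by
      have hret : IsDefRetract r (Set.range π) := by
        refine ⟨fun x => ⟨π x, Set.mem_range_self x⟩, ?_, ?_, ?_⟩
        · exact fun x x' => hπshort x x'
        · rintro ⟨a, y, hy⟩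
          apply Subtype.ext
          show π a = a
          rw [← hy, ← Function.comp_apply (f := π), hidem]
        · exact hiterhom N
      have := h1 _ hret
      exact Set.range_eq_univ.mp this
    have hπid : π = id := by
      funext y
      obtain ⟨x, hx⟩ := hsurj y
      calc π y = π (π x) := by rw [hx]
        _ = π x := by rw [← Function.comp_apply (f := π), hidem]
        _ = y := hx
    have hNsplit : N = (N - 1) + 1 := by omega
    have hkey : ∀ x, φ^[(N - 1) + 1] x = x := fun x => by
      rw [← hNsplit, ← hπ, hπid, id]
    have hleft : ∀ x, φ^[N - 1] (φ x) = x := fun x => by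
      have h := hkey x; rwa [Function.iterate_succ_apply] at h
    have hright : ∀ x, φ (φ^[N - 1] x) = x := fun x => by
      have h := hkey x; rwa [Function.iterate_succ_apply'] at h
    refine ⟨Function.bijective_iff_has_inverse.mpr ⟨φ^[N - 1], hleft, hright⟩, fun x x' => ?_⟩
    refine le_antisymm (hφ x x') ?_
    have := isShort_iterate hφ (N - 1) (φ x) (φ x')
    rwa [hleft, hleft] at this
  tfae_have 2 → 3 := by
    intro h2 φ hφ hd
    exact h2 φ hφ (Relation.ReflTransGen.single ⟨hφ, isShort_id, hd.symm⟩)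
  tfae_have 3 → 1 := by
    intro h3 A hA
    obtain ⟨ρ, hρshort, hfix, hhom⟩ := hA
    have hiso : ∀ f : X → X, MapHomotopic r id f → IsIsometry f := by
      intro f h
      induction h with
      | refl => exact ⟨Function.bijective_id, fun _ _ => rfl⟩
      | tail _ h₂ ih => exact isometry_step h3 ih h₂
    have hiso' := hiso _ (mapHomotopic_symm hhom)
    apply Set.eq_univ_of_forall
    intro x
    obtain ⟨y, hy⟩ := hiso'.1.2 x
    exact hy ▸ (ρ y).2
  tfae_finish
end

section
/- Let X be a finite nonempty quasimetric space and for r ≥ 0 let N_X(r) denote the minimal cardinality of an r-deformation retract of X (equivalently, the cardinality of an r-minimal model of X). Then the function N_X : [0,∞) → ℕ is antitone (r ≤ r' implies N_X(r') ≤ N_X(r)), takes finitely many values, and is lower semi-continuous; more precisely, for every r ≥ 0 there exists ε > 0 such that N_X(r') = N_X(r) for all r' ∈ [r, r+ε). -/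
open scoped ENNReal

open QuasiMetric

/-!
Enlarging `r` only enlarges the set of `r`-deformation retracts, so `N_X` is antitone and bounded
by `|X|`. Conversely, for finite `X` there are finitely many maps `X → X`, hence finitely many
distances `mapDist u v`; just above `r` no new one drops below the threshold, so the
`r'`-deformation retracts for `r'` slightly larger than `r` are exactly the `r`-deformation
retracts.
-/

open Filter Topology

section DefRetract

variable {X : Type*} [QuasiMetric X]

theorem IsDefRetract.of_mapDist_le_imp {r r' : ℝ}
    (h : ∀ u v : X → X, mapDist u v ≤ ENNReal.ofReal r' → mapDist u v ≤ ENNReal.ofReal r)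
    {A : Set X} (hA : IsDefRetract r' A) : IsDefRetract r A := by
  obtain ⟨ρ, hρ, hretr, hhom⟩ := hA
  exact ⟨ρ, hρ, hretr,
    Relation.ReflTransGen.mono (fun u v ⟨hu, hv, hd⟩ => ⟨hu, hv, hd.imp (h u v) (h v u)⟩) _ _ hhom⟩

theorem IsDefRetract.mono {r r' : ℝ} (h : r ≤ r') {A : Set X} (hA : IsDefRetract r A) :
    IsDefRetract r' A :=
  hA.of_mapDist_le_imp fun _ _ hd => hd.trans (ENNReal.ofReal_le_ofReal h)

theorem isDefRetract_univ (r : ℝ) : IsDefRetract r (Set.univ : Set X) :=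
  ⟨fun x => ⟨x, trivial⟩, fun _ _ => le_rfl, fun _ => rfl, .refl⟩

theorem eventually_mapDist_le_imp {Y : Type*} [QuasiMetric Y] [Finite X] [Finite Y] (r : ℝ) :
    ∀ᶠ r' in 𝓝 r, ∀ u v : X → Y,
      mapDist u v ≤ ENNReal.ofReal r' → mapDist u v ≤ ENNReal.ofReal r := by
  refine eventually_all.2 fun u => eventually_all.2 fun v => ?_
  by_cases hle : mapDist u v ≤ ENNReal.ofReal r
  · exact .of_forall fun _ _ => hle
  · have hcont := ENNReal.continuous_ofReal.continuousAt (x := r)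
    filter_upwards [hcont.eventually (gt_mem_nhds (not_le.1 hle))] with r' hr' hd
    exact absurd hd (not_le.2 hr')

theorem eventually_isDefRetract_imp [Finite X] (r : ℝ) :
    ∀ᶠ r' in 𝓝 r, ∀ A : Set X, IsDefRetract r' A → IsDefRetract r A := by
  filter_upwards [eventually_mapDist_le_imp (X := X) (Y := X) r] with r' h A hA
  exact hA.of_mapDist_le_imp h

end DefRetract

section MinRetractCard

variable (X : Type*) [QuasiMetric X]

/-- The function `N_X`. -/
noncomputable def minRetractCard (r : ℝ) : ℕ :=
  sInf {k : ℕ | ∃ A : Set X, IsDefRetract r A ∧ Nat.card A = k}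

variable {X}

theorem minRetractCard_le_of_imp {r r' : ℝ}
    (h : ∀ A : Set X, IsDefRetract r A → IsDefRetract r' A) :
    minRetractCard X r' ≤ minRetractCard X r :=
  csInf_le_csInf (OrderBot.bddBelow _) ⟨_, Set.univ, isDefRetract_univ r, rfl⟩
    fun _ ⟨A, hA, hk⟩ => ⟨A, h A hA, hk⟩

theorem minRetractCard_antitone : Antitone (minRetractCard X) :=
  fun _ _ h => minRetractCard_le_of_imp fun _ hA => hA.mono h

theorem minRetractCard_le_card (r : ℝ) : minRetractCard X r ≤ Nat.card X :=
  Nat.sInf_le ⟨Set.univ, isDefRetract_univ r, Nat.card_univ⟩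

theorem finite_range_minRetractCard : (Set.range (minRetractCard X)).Finite :=
  (Set.finite_Iic (Nat.card X)).subset <| Set.range_subset_iff.2 minRetractCard_le_card

theorem eventually_minRetractCard_eq [Finite X] (r : ℝ) :
    ∀ᶠ r' in 𝓝[≥] r, minRetractCard X r' = minRetractCard X r := by
  filter_upwards [self_mem_nhdsWithin, nhdsWithin_le_nhds (eventually_isDefRetract_imp (X := X) r)]
    with r' (hr' : r ≤ r') himp
  exact le_antisymm (minRetractCard_antitone hr') (minRetractCard_le_of_imp himp)

end MinRetractCard

theorem stmt_9_general {X : Type*} [QuasiMetric X] [Finite X] :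
    let N : ℝ → ℕ := fun r => sInf {k : ℕ | ∃ A : Set X, IsDefRetract r A ∧ Nat.card A = k}
    (∀ r r' : ℝ, 0 ≤ r → r ≤ r' → N r' ≤ N r) ∧
    (N '' Set.Ici 0).Finite ∧
    (∀ r : ℝ, 0 ≤ r → ∃ ε > 0, ∀ r' : ℝ, r ≤ r' → r' < r + ε → N r' = N r) := by
  refine ⟨fun _ _ _ h => minRetractCard_antitone h,
    finite_range_minRetractCard.subset (Set.image_subset_range _ _), fun r _ => ?_⟩
  obtain ⟨u, hu, hIco⟩ := mem_nhdsGE_iff_exists_Ico_subset.1 (eventually_minRetractCard_eq (X := X) r)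
  exact ⟨u - r, sub_pos.2 hu, fun r' hr' hr'u => hIco ⟨hr', by linarith⟩⟩

theorem stmt_9 {X : Type*} [QuasiMetric X] [Finite X] [Nonempty X] :
    let N : ℝ → ℕ := fun r => sInf {k : ℕ | ∃ A : Set X, IsDefRetract r A ∧ Nat.card A = k}
    (∀ r r' : ℝ, 0 ≤ r → r ≤ r' → N r' ≤ N r) ∧
    (N '' Set.Ici 0).Finite ∧
    (∀ r : ℝ, 0 ≤ r → ∃ ε > 0, ∀ r' : ℝ, r ≤ r' → r' < r + ε → N r' = N r) :=
  stmt_9_general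
end

section
/- Let G be a digraph and let A ⊆ G₀ be a retract of the quasimetric space Q(G): there is a short map ρ : Q(G) → A (A carrying the quasimetric induced from Q(G)) with ρ(a) = a for all a ∈ A. Define the subdigraph H of G by H₀ = A and H₁ = {(h,h') ∈ A × A : d_G(h,h') ≤ 1}. Then ρ is a morphism of digraphs from G to H with ρ∘ι = id_H (so H is a retract of G), and the shortest-path quasimetric of H coincides with the quasimetric on A induced from Q(G); i.e., A with the induced quasimetric equals Q(H). -/
open scoped ENNReal

/-- The shortest-path distance in `[0,∞]` determined by a relation `adj` on `V`:
the infimum of lengths of `adj`-chains from `x` to `y`. -/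
noncomputable def pathDist {V : Type*} (adj : V → V → Prop) (x y : V) : ℝ≥0∞ :=
  sInf {c : ℝ≥0∞ | ∃ l : List V, List.Chain adj x l ∧
    (x :: l).getLast (List.cons_ne_nil x l) = y ∧ c = l.length}

/-!
`pathDist adj` is the largest `[0,∞]`-valued quasimetric in which `adj`-adjacent points are at
distance at most `1`. Hence a short retraction `ρ` onto `A` sends edges of `G` to pairs at
distance `≤ 1`, i.e. to edges of `H`, and is therefore short from `Q(G)` to `Q(H)`; as it fixes
`A`, `d_H ≤ d_G` on `A`. Conversely `d_G` restricted to `A` is a quasimetric in which the edges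
of `H` have length `≤ 1`, so `d_G ≤ d_H` on `A`.
-/

section PathDist

variable {V : Type*} {adj : V → V → Prop}

theorem pathDist_le_length {x y : V} {l : List V} (hl : List.IsChain adj (x :: l))
    (hlast : (x :: l).getLast (List.cons_ne_nil x l) = y) : pathDist adj x y ≤ l.length :=
  sInf_le ⟨l, hl, hlast, rfl⟩

theorem le_pathDist {c : ℝ≥0∞} {x y : V}
    (h : ∀ l : List V, List.IsChain adj (x :: l) →
      (x :: l).getLast (List.cons_ne_nil x l) = y → c ≤ l.length) :
    c ≤ pathDist adj x y :=
  le_sInf fun _ ⟨l, hl, hlast, hc⟩ => hc ▸ h l hl hlast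

theorem pathDist_self (x : V) : pathDist adj x x = 0 :=
  nonpos_iff_eq_zero.1 <| by
    simpa using pathDist_le_length (adj := adj) (l := []) (.singleton x) rfl

theorem pathDist_le_one {x y : V} (h : adj x y) : pathDist adj x y ≤ 1 := by
  simpa using pathDist_le_length (l := [y]) (List.IsChain.cons_cons h (.singleton y)) rfl

theorem pathDist_le_one_add {x a : V} (h : adj x a) (z : V) :
    pathDist adj x z ≤ 1 + pathDist adj a z := by
  rw [← tsub_le_iff_left]
  refine le_pathDist fun l hl hlast => tsub_le_iff_left.2 ?_
  calc pathDist adj x z ≤ (a :: l).length :=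
        pathDist_le_length (List.IsChain.cons_cons h hl) (by simpa using hlast)
    _ = 1 + l.length := by push_cast [List.length_cons]; ring

theorem le_pathDist_add (f : V → ℝ≥0∞) (hf : ∀ x a, adj x a → f x ≤ 1 + f a) (x y : V) :
    f x ≤ pathDist adj x y + f y := by
  rw [← tsub_le_iff_right]
  refine le_pathDist fun l hl hlast => tsub_le_iff_right.2 ?_
  induction l generalizing x with
  | nil => simp_all
  | cons a t ih =>
    obtain ⟨hxa, hat⟩ := List.isChain_cons_cons.mp hl
    calc f x ≤ 1 + f a := hf x a hxa
      _ ≤ 1 + (t.length + f y) := by gcongr; exact ih a hat (by simpa using hlast)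
      _ = (a :: t).length + f y := by push_cast [List.length_cons]; ring

theorem pathDist_triangle (x y z : V) :
    pathDist adj x z ≤ pathDist adj x y + pathDist adj y z :=
  le_pathDist_add (pathDist adj · z) (fun _ _ h => pathDist_le_one_add h z) x y

theorem le_pathDist_of_triangle (d : V → V → ℝ≥0∞) (hd_self : ∀ x, d x x = 0)
    (hd_triangle : ∀ x y z, d x z ≤ d x y + d y z) (hd_adj : ∀ x y, adj x y → d x y ≤ 1)
    (x y : V) : d x y ≤ pathDist adj x y := by
  simpa [hd_self] using le_pathDist_add (d · y)
    (fun w a h => (hd_triangle w a y).trans (by gcongr; exact hd_adj w a h)) x y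

theorem pathDist_map_le {W : Type*} {adj' : W → W → Prop} (f : V → W)
    (hf : ∀ x y, adj x y → adj' (f x) (f y)) (x y : V) :
    pathDist adj' (f x) (f y) ≤ pathDist adj x y :=
  le_pathDist_of_triangle (fun x y => pathDist adj' (f x) (f y)) (fun _ => pathDist_self _)
    (fun _ _ _ => pathDist_triangle _ _ _) (fun _ _ h => pathDist_le_one (hf _ _ h)) x y

end PathDist

theorem stmt_11_general {V : Type*} (adj : V → V → Prop)
    (A : Set V) (ρ : V → A)
    (hshort : ∀ x y : V, pathDist adj ((ρ x : V)) ((ρ y : V)) ≤ pathDist adj x y)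
    (hretr : ∀ a : A, ρ a.1 = a) :
    -- `ρ` is a morphism of digraphs from `G` to the subdigraph `H` with
    -- `H₀ = A` and `H₁ = {(h,h') : d_G(h,h') ≤ 1}` (and `ρ∘ι = id` holds by `hretr`):
    (∀ x y : V, adj x y → pathDist adj ((ρ x : V)) ((ρ y : V)) ≤ 1) ∧
    -- the shortest-path quasimetric of `H` coincides with the quasimetric induced from `Q(G)`:
    (∀ h h' : A, pathDist (fun a b : A => pathDist adj a.1 b.1 ≤ 1) h h' =
      pathDist adj h.1 h'.1) := by
  have hmorph : ∀ x y : V, adj x y → pathDist adj ((ρ x : V)) ((ρ y : V)) ≤ 1 :=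
    fun x y h => (hshort x y).trans (pathDist_le_one h)
  refine ⟨hmorph, fun h h' => le_antisymm ?_ ?_⟩
  · simpa only [hretr] using pathDist_map_le ρ hmorph h.1 h'.1
  · exact le_pathDist_of_triangle (fun a b : A => pathDist adj a.1 b.1) (fun _ => pathDist_self _)
      (fun _ _ _ => pathDist_triangle _ _ _) (fun _ _ h => h) h h'

theorem stmt_11 {V : Type*} (adj : V → V → Prop) (hrefl : ∀ v, adj v v)
    (A : Set V) (ρ : V → A)
    (hshort : ∀ x y : V, pathDist adj ((ρ x : V)) ((ρ y : V)) ≤ pathDist adj x y)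
    (hretr : ∀ a : A, ρ a.1 = a) :
    -- `ρ` is a morphism of digraphs from `G` to the subdigraph `H` with
    -- `H₀ = A` and `H₁ = {(h,h') : d_G(h,h') ≤ 1}` (and `ρ∘ι = id` holds by `hretr`):
    (∀ x y : V, adj x y → pathDist adj ((ρ x : V)) ((ρ y : V)) ≤ 1) ∧
    -- the shortest-path quasimetric of `H` coincides with the quasimetric induced from `Q(G)`:
    (∀ h h' : A, pathDist (fun a b : A => pathDist adj a.1 b.1 ≤ 1) h h' =
      pathDist adj h.1 h'.1) :=
  stmt_11_general adj A ρ hshort hretr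
end

section
/- Let K be a commutative ring and let A', A, A'', B be K-modules. Let φ' : A' → A and η : A → A'' be K-linear maps with Im φ' = Ker η (the row A' → A → A'' is exact at A). Let φ : B → A and σ : A' → B be K-linear maps with φ∘σ = φ', and set ψ = η∘φ : B → A''. Then Im φ' ⊆ Im φ, and η induces an isomorphism of K-modules (Im φ)/(Im φ') ≅ Im ψ, where Im φ' is regarded as a submodule of Im φ. -/
theorem stmt_12 {K : Type*} [CommRing K] {A' A A'' B : Type*}
    [AddCommGroup A'] [Module K A'] [AddCommGroup A] [Module K A]
    [AddCommGroup A''] [Module K A''] [AddCommGroup B] [Module K B]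
    (φ' : A' →ₗ[K] A) (η : A →ₗ[K] A'')
    (hexact : LinearMap.range φ' = LinearMap.ker η)
    (φ : B →ₗ[K] A) (σ : A' →ₗ[K] B) (hφσ : φ ∘ₗ σ = φ') :
    LinearMap.range φ' ≤ LinearMap.range φ ∧
    ∃ e : (↥(LinearMap.range φ) ⧸
            (LinearMap.range φ').comap (LinearMap.range φ).subtype) ≃ₗ[K]
          ↥(LinearMap.range (η ∘ₗ φ)),
      ∀ a : LinearMap.range φ, (e (Submodule.Quotient.mk a) : A'') = η a.1 := by
  have hle : LinearMap.range φ' ≤ LinearMap.range φ := by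
    rintro x ⟨a, rfl⟩
    exact ⟨σ a, by rw [← hφσ]; rfl⟩
  set f : ↥(LinearMap.range φ) →ₗ[K] A'' := η ∘ₗ (LinearMap.range φ).subtype with hf
  have hker : (LinearMap.range φ').comap (LinearMap.range φ).subtype = LinearMap.ker f := by
    ext x
    simp [hf, hexact, LinearMap.mem_ker]
  have hrange : LinearMap.range f = LinearMap.range (η ∘ₗ φ) := by
    ext x
    constructor
    · rintro ⟨⟨a, b, rfl⟩, rfl⟩; exact ⟨b, rfl⟩
    · rintro ⟨b, rfl⟩; exact ⟨⟨φ b, b, rfl⟩, rfl⟩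
  refine ⟨hle, (Submodule.quotEquivOfEq _ _ hker).trans
    (f.quotKerEquivRange.trans (LinearEquiv.ofEq _ _ hrange)), fun a => ?_⟩
  rfl
end

section
/- Let K be a commutative ring, X a quasimetric space, I ⊆ ℝ a nonempty interval and r ≥ 0. Define an equivalence relation ∼ on X by: x ∼ y if and only if x ∼_s y for some s ∈ I^r. If 0 ∈ I, then SH^r_{0,I}(X) is isomorphic to the free K-module on the quotient set X/∼; in particular SH^r_{0,{0}}(X) ≅ K·(X/∼_r). If 0 ∉ I, then SH^r_{0,I}(X) = 0. -/
open scoped ENNReal Classical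

open QuasiMetric

/-- A tuple `(x₀, …, x_n)` is admissible if it has no consecutive repetitions and all
consecutive distances are finite. -/
def IsGoodTuple {X : Type*} [QuasiMetric X] {n : ℕ} (f : Fin (n + 1) → X) : Prop :=
  ∀ i : Fin n, f i.castSucc ≠ f i.succ ∧ qdist (f i.castSucc) (f i.succ) < ⊤

/-- The set of generators of `RC_n(X)`. -/
def Tup (X : Type*) [QuasiMetric X] (n : ℕ) : Type _ :=
  {f : Fin (n + 1) → X // IsGoodTuple f}

/-- The `n`-th term of the reachability chain complex: the free `K`-module on `Tup X n`. -/
abbrev RC (K : Type*) [CommRing K] (X : Type*) [QuasiMetric X] (n : ℕ) : Type _ :=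
  Tup X n →₀ K

/-- The generator corresponding to a tuple; tuples with a consecutive repetition
(or an infinite consecutive distance) are interpreted as `0`. -/
noncomputable def gen (K : Type*) [CommRing K] {X : Type*} [QuasiMetric X] {n : ℕ}
    (f : Fin (n + 1) → X) : RC K X n :=
  if h : IsGoodTuple f then Finsupp.single ⟨f, h⟩ 1 else 0

/-- The differential `∂(x₀,…,x_{n+1}) = Σ (−1)^i (x₀,…,x̂ᵢ,…,x_{n+1})` of the
reachability chain complex. -/
noncomputable def bdry (K : Type*) [CommRing K] (X : Type*) [QuasiMetric X] (n : ℕ) :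
    RC K X (n + 1) →ₗ[K] RC K X n :=
  Finsupp.lsum K fun t => LinearMap.toSpanSingleton K (RC K X n)
    (∑ i : Fin (n + 2), ((-1 : K) ^ (i : ℕ)) • gen K (i.removeNth t.1))

/-- The total length `L(x₀,…,x_n) = Σ d(xᵢ, xᵢ₊₁)` of a tuple. -/
noncomputable def Ltot {X : Type*} [QuasiMetric X] {n : ℕ} (t : Tup X n) : ℝ≥0∞ :=
  ∑ i : Fin n, qdist (t.1 i.castSucc) (t.1 i.succ)

/-- The filtration term `F_S RC_n(X)` associated with a set `S ⊆ ℝ` of filtration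
parameters (for a lower set `S` this is `F_S = ⋃_{s ∈ S} F_s`): the span of the
tuples `t` with `L(t) ≤ s` for some `s ∈ S`. -/
noncomputable def FilL (K : Type*) [CommRing K] (X : Type*) [QuasiMetric X]
    (S : Set ℝ) (n : ℕ) : Submodule K (RC K X n) :=
  Submodule.span K {v : RC K X n | ∃ t : Tup X n,
    (∃ s ∈ S, 0 ≤ s ∧ Ltot t ≤ ENNReal.ofReal s) ∧ v = Finsupp.single t 1}

/-- Relative cycles of the quotient complex `F_R/F_L` of the reachability complex. -/
noncomputable def rcCycles (K : Type*) [CommRing K] (X : Type*) [QuasiMetric X]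
    (Rs Ls : Set ℝ) : ∀ n : ℕ, Submodule K (RC K X n)
  | 0 => FilL K X Rs 0
  | (n + 1) => FilL K X Rs (n + 1) ⊓ (FilL K X Ls n).comap (bdry K X n)

/-- Relative boundaries of the quotient complex `F_R/F_L` of the reachability complex. -/
noncomputable def rcBdries (K : Type*) [CommRing K] (X : Type*) [QuasiMetric X]
    (Rs Ls : Set ℝ) (n : ℕ) : Submodule K (RC K X n) :=
  (FilL K X Ls n ⊓ FilL K X Rs n) ⊔ (FilL K X Rs (n + 1)).map (bdry K X n)

/-- The lower set `R_I` of an interval `I`. -/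
def lowR (I : Set ℝ) : Set ℝ := {s : ℝ | ∃ i ∈ I, s ≤ i}

/-- The lower set `L_I` of an interval `I`. -/
def lowL (I : Set ℝ) : Set ℝ := {s : ℝ | ∀ i ∈ I, s < i}

/-- The homology `H_n(C_{I^r})` of the quotient complex
`C_{I^r} = F_{R_I + r} RC(X) / F_{L_I} RC(X)`, presented as relative cycles modulo
relative boundaries. -/
noncomputable def Hup (K : Type*) [CommRing K] (X : Type*) [QuasiMetric X]
    (r : ℝ) (I : Set ℝ) (n : ℕ) : Type _ :=
  @HasQuotient.Quotient ↥(rcCycles K X ((· + r) '' lowR I) (lowL I) n)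
    (Submodule K ↥(rcCycles K X ((· + r) '' lowR I) (lowL I) n))
    (@Submodule.hasQuotient K ↥(rcCycles K X ((· + r) '' lowR I) (lowL I) n) _ inferInstance inferInstance)
    ((rcBdries K X ((· + r) '' lowR I) (lowL I) n).comap
      (rcCycles K X ((· + r) '' lowR I) (lowL I) n).subtype)

noncomputable instance (K : Type*) [CommRing K] (X : Type*) [QuasiMetric X]
    (r : ℝ) (I : Set ℝ) (n : ℕ) : AddCommGroup (Hup K X r I n) :=
  inferInstanceAs (AddCommGroup
    (@HasQuotient.Quotient ↥(rcCycles K X ((· + r) '' lowR I) (lowL I) n)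
      (Submodule K ↥(rcCycles K X ((· + r) '' lowR I) (lowL I) n))
    (@Submodule.hasQuotient K ↥(rcCycles K X ((· + r) '' lowR I) (lowL I) n) _ inferInstance inferInstance)
      ((rcBdries K X ((· + r) '' lowR I) (lowL I) n).comap
        (rcCycles K X ((· + r) '' lowR I) (lowL I) n).subtype)))

noncomputable instance (K : Type*) [CommRing K] (X : Type*) [QuasiMetric X]
    (r : ℝ) (I : Set ℝ) (n : ℕ) : Module K (Hup K X r I n) :=
  inferInstanceAs (Module K
    (@HasQuotient.Quotient ↥(rcCycles K X ((· + r) '' lowR I) (lowL I) n)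
      (Submodule K ↥(rcCycles K X ((· + r) '' lowR I) (lowL I) n))
    (@Submodule.hasQuotient K ↥(rcCycles K X ((· + r) '' lowR I) (lowL I) n) _ inferInstance inferInstance)
      ((rcBdries K X ((· + r) '' lowR I) (lowL I) n).comap
        (rcCycles K X ((· + r) '' lowR I) (lowL I) n).subtype)))

/-- The `r`-spectral homology `SH^r_{n,I}(X)`: the image of `H_n(C_{I_r})` in
`H_n(C_{I^r})`, realized concretely as the image in `H_n(C_{I^r})` of the relative
cycles of `C_{I_r} = F_{R_I} RC(X) / F_{L_I - r} RC(X)`. -/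
noncomputable def SH (K : Type*) [CommRing K] (X : Type*) [QuasiMetric X]
    (r : ℝ) (I : Set ℝ) (n : ℕ) : Submodule K (Hup K X r I n) :=
  Submodule.map
    (@Submodule.mkQ K ↥(rcCycles K X ((· + r) '' lowR I) (lowL I) n) _ inferInstance inferInstance
      ((rcBdries K X ((· + r) '' lowR I) (lowL I) n).comap
      (rcCycles K X ((· + r) '' lowR I) (lowL I) n).subtype))
    ((rcCycles K X (lowR I) ((· - r) '' lowL I) n).comap
      (rcCycles K X ((· + r) '' lowR I) (lowL I) n).subtype)

/-- Two points of a quasimetric space are `s`-homotopic if they are connected by a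
chain of points in which each consecutive pair is at distance `≤ s` in one direction
or the other. -/
def PtHomotopic {X : Type*} [QuasiMetric X] (s : ℝ) : X → X → Prop :=
  Relation.ReflTransGen
    (fun x y : X => qdist x y ≤ ENNReal.ofReal s ∨ qdist y x ≤ ENNReal.ofReal s)

section Aux

open QuasiMetric Finsupp

variable (K : Type*) [CommRing K] {X : Type*} [QuasiMetric X]

/-- The constant tuple of length one. -/
noncomputable def cTup (x : X) : Tup X 0 := ⟨fun _ => x, fun i => i.elim0⟩

@[simp] lemma cTup_eval (x : X) : (cTup x).1 0 = x := rfl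

lemma cTup_eq (t : Tup X 0) : cTup (t.1 0) = t :=
  Subtype.ext (funext fun j => congrArg t.1 (Fin.eq_zero j).symm)

lemma gen_zero (g : Fin 1 → X) : gen K g = Finsupp.single (cTup (g 0)) 1 := by
  have h : IsGoodTuple g := fun i => i.elim0
  rw [gen, dif_pos h]
  congr 1
  exact (cTup_eq (⟨g, h⟩ : Tup X 0)).symm

lemma bdry_single (t : Tup X 1) :
    bdry K X 0 (Finsupp.single t 1) =
      Finsupp.single (cTup (t.1 1)) 1 - Finsupp.single (cTup (t.1 0)) 1 := by
  have e0 : (0 : Fin 2).succAbove 0 = 1 := by decide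
  have e1 : (1 : Fin 2).succAbove 0 = 0 := by decide
  rw [bdry, Finsupp.lsum_single, LinearMap.toSpanSingleton_apply, one_smul, Fin.sum_univ_two,
    gen_zero, gen_zero]
  show ((-1 : K) ^ ((0 : Fin 2) : ℕ)) • Finsupp.single (cTup (t.1 ((0 : Fin 2).succAbove 0))) 1
      + ((-1 : K) ^ ((1 : Fin 2) : ℕ)) • Finsupp.single (cTup (t.1 ((1 : Fin 2).succAbove 0))) 1
      = _
  rw [e0, e1]
  simp [sub_eq_add_neg]

lemma ltot_one (t : Tup X 1) : Ltot t = qdist (t.1 0) (t.1 1) := by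
  simp only [Ltot, Fin.sum_univ_one, Fin.castSucc_zero, Fin.succ_zero_eq_one]

lemma filL_zero_top {S : Set ℝ} (hS : ∃ s ∈ S, 0 ≤ s) : FilL K X S 0 = ⊤ := by
  rw [eq_top_iff]
  intro v hv
  clear hv
  induction v using Finsupp.induction with
  | zero => exact zero_mem _
  | single_add t c f _ _ ih =>
    refine add_mem ?_ ih
    have hmem : Finsupp.single t 1 ∈ FilL K X S 0 := by
      apply Submodule.subset_span
      obtain ⟨s, hsS, hs0⟩ := hS
      exact ⟨t, ⟨s, hsS, hs0, by simp [Ltot]⟩, rfl⟩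
    have := (FilL K X S 0).smul_mem c hmem
    simpa [Finsupp.smul_single] using this

lemma filL_zero_bot {S : Set ℝ} (hS : ∀ s ∈ S, s < 0) (n : ℕ) : FilL K X S n = ⊥ := by
  rw [FilL]
  convert Submodule.span_empty (R := K)
  ext v
  simp only [Set.mem_setOf_eq, Set.mem_empty_iff_false, iff_false, not_exists]
  rintro t ⟨⟨s, hsS, hs0, -⟩, -⟩
  exact absurd (hS s hsS) (not_lt.2 hs0)

/-- Quotient of a `⊤` submodule. -/
noncomputable def quotTopEquiv {M : Type*} [AddCommGroup M] [Module K M] {C : Submodule K M}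
    (hC : C = ⊤) (B : Submodule K M) :
    (↥C ⧸ B.comap C.subtype) ≃ₗ[K] (M ⧸ B) := by
  subst hC
  refine Submodule.Quotient.equiv _ _ (Submodule.topEquiv) ?_
  ext x
  constructor
  · rintro ⟨y, hy, rfl⟩
    exact hy
  · intro hx
    exact ⟨⟨x, trivial⟩, hx, rfl⟩

lemma ptHomotopic_mono {s s' : ℝ} (h : s ≤ s') {x y : X} (hh : PtHomotopic s x y) :
    PtHomotopic s' x y :=
  by
  induction hh with
  | refl => exact Relation.ReflTransGen.refl
  | tail _ hab ih => exact ih.tail (hab.imp (fun h1 => h1.trans (ENNReal.ofReal_le_ofReal h))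
      (fun h1 => h1.trans (ENNReal.ofReal_le_ofReal h)))

lemma step_mem {Rs : Set ℝ} {s : ℝ} (hs : s ∈ Rs) {x y : X}
    (hxy : qdist x y ≤ ENNReal.ofReal s ∨ qdist y x ≤ ENNReal.ofReal s) :
    Finsupp.single (cTup x) 1 - Finsupp.single (cTup y) 1 ∈
      (FilL K X Rs 1).map (bdry K X 0) := by
  by_cases hne : x = y
  · subst hne; simp
  rcases le_or_gt 0 s with hs0 | hs0
  · have key : ∀ a b : X, a ≠ b → qdist a b ≤ ENNReal.ofReal s →
        Finsupp.single (cTup b) 1 - Finsupp.single (cTup a) 1 ∈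
          (FilL K X Rs 1).map (bdry K X 0) := by
      intro a b hab hd
      have hgood : IsGoodTuple (![a, b]) := by
        intro i
        have hi : i = 0 := Fin.eq_zero i
        subst hi
        refine ⟨?_, ?_⟩
        · simpa using hab
        · exact lt_of_le_of_lt (by simpa using hd) ENNReal.ofReal_lt_top
      set t : Tup X 1 := ⟨![a, b], hgood⟩ with ht
      have h0 : t.1 0 = a := rfl
      have h1 : t.1 1 = b := rfl
      have hmem : Finsupp.single t 1 ∈ FilL K X Rs 1 := by
        apply Submodule.subset_span
        refine ⟨t, ⟨s, hs, hs0, ?_⟩, rfl⟩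
        rw [ltot_one, h0, h1]
        exact hd
      have := Submodule.mem_map_of_mem (f := bdry K X 0) hmem
      rwa [bdry_single, h0, h1] at this
    rcases hxy with h | h
    · have := key x y hne h
      simpa [neg_sub] using neg_mem this
    · exact key y x (Ne.symm hne) h
  · exfalso
    have hz : ENNReal.ofReal s = 0 := ENNReal.ofReal_eq_zero.2 hs0.le
    rcases hxy with h | h
    · exact hne ((qdist_eq_zero_iff x y).1 (le_antisymm (hz ▸ h) zero_le))
    · exact hne (((qdist_eq_zero_iff y x).1 (le_antisymm (hz ▸ h) zero_le)).symm)

lemma hom_mem {Rs : Set ℝ} {s : ℝ} (hs : s ∈ Rs) {x y : X} (h : PtHomotopic s x y) :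
    Finsupp.single (cTup x) 1 - Finsupp.single (cTup y) 1 ∈
      (FilL K X Rs 1).map (bdry K X 0) := by
  induction h with
  | refl => simp
  | @tail b c hab hbc ih =>
    have h2 := step_mem K hs hbc
    have := add_mem ih h2
    simpa using this

end Aux

lemma sh_zero_of_mem (K : Type*) [CommRing K] (X : Type*) [QuasiMetric X]
    (r : ℝ) (hr : 0 ≤ r) (I : Set ℝ) (h0 : (0 : ℝ) ∈ I) :
    Nonempty (↥(SH K X r I 0) ≃ₗ[K]
      ((Quot fun x y : X => ∃ s ∈ ((· + r) '' lowR I) \ lowL I, PtHomotopic s x y) →₀ K)) := by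
  classical
  set Rs : Set ℝ := (· + r) '' lowR I with hRsdef
  set rel : X → X → Prop := fun x y : X => ∃ s ∈ Rs \ lowL I, PtHomotopic s x y with hreldef
  have hr_mem : r ∈ Rs := ⟨0, ⟨0, h0, le_rfl⟩, zero_add r⟩
  have hLneg : ∀ s ∈ lowL I, s < 0 := fun s hs => hs 0 h0
  set B : Submodule K (RC K X 0) := (FilL K X Rs 1).map (bdry K X 0) with hBdef
  -- the cycles are everything
  have hCtop : rcCycles K X Rs (lowL I) 0 = ⊤ := filL_zero_top K ⟨r, hr_mem, hr⟩
  have hC'top : rcCycles K X (lowR I) ((· - r) '' lowL I) 0 = ⊤ :=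
    filL_zero_top K ⟨0, ⟨0, h0, le_rfl⟩, le_rfl⟩
  have hSH : SH K X r I 0 = ⊤ := by
    unfold SH
    rw [hC'top, Submodule.comap_top]
    exact (Submodule.map_top _).trans (Submodule.range_mkQ _)
  have hBd : rcBdries K X Rs (lowL I) 0 = B := by
    unfold rcBdries
    rw [filL_zero_bot K hLneg 0, bot_inf_eq, bot_sup_eq]
  -- the map to the free module on the quotient
  set q : RC K X 0 →ₗ[K] ((Quot rel) →₀ K) :=
    Finsupp.lmapDomain K K (fun t : Tup X 0 => Quot.mk rel (t.1 0)) with hq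
  have hqs : ∀ (t : Tup X 0) (b : K),
      q (Finsupp.single t b) = Finsupp.single (Quot.mk rel (t.1 0)) b := by
    intro t b
    rw [hq, Finsupp.lmapDomain_apply, Finsupp.mapDomain_single]
  have hBker : B ≤ LinearMap.ker q := by
    rw [hBdef, FilL, Submodule.map_span, Submodule.span_le]
    rintro w ⟨v, ⟨t, ⟨s, hsR, hs0, hL⟩, rfl⟩, rfl⟩
    have hrel01 : rel (t.1 0) (t.1 1) := by
      refine ⟨s, ⟨hsR, fun hLs => absurd (hLneg s hLs) (not_lt.2 hs0)⟩, ?_⟩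
      exact Relation.ReflTransGen.single (Or.inl (by rw [← ltot_one]; exact hL))
    have : q (bdry K X 0 (Finsupp.single t 1)) = 0 := by
      rw [bdry_single, map_sub, hqs, hqs, cTup_eval, cTup_eval, ← Quot.sound hrel01]
      exact sub_self _
    exact this
  set φ : (RC K X 0 ⧸ B) →ₗ[K] ((Quot rel) →₀ K) := B.liftQ q hBker with hφ
  have hwd : ∀ a b : X, rel a b →
      (Submodule.Quotient.mk (Finsupp.single (cTup a) (1 : K)) : RC K X 0 ⧸ B) =
        Submodule.Quotient.mk (Finsupp.single (cTup b) (1 : K)) := by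
    rintro a b ⟨s, ⟨hsR, -⟩, hhom⟩
    exact (Submodule.Quotient.eq B).2 (hom_mem K hsR hhom)
  set g0 : Quot rel → (RC K X 0 ⧸ B) :=
    Quot.lift (fun x : X => Submodule.Quotient.mk (Finsupp.single (cTup x) (1 : K))) hwd
    with hg0
  set ψ : ((Quot rel) →₀ K) →ₗ[K] (RC K X 0 ⧸ B) :=
    Finsupp.lift (RC K X 0 ⧸ B) K (Quot rel) g0 with hψ
  have hψs : ∀ (a : Quot rel) (b : K), ψ (Finsupp.single a b) = b • g0 a := by
    intro a b
    rw [hψ, Finsupp.lift_apply]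
    exact Finsupp.sum_single_index (zero_smul K _)
  have h1 : φ.comp ψ = LinearMap.id := by
    apply Finsupp.lhom_ext
    intro a b
    induction a using Quot.ind with
    | _ x =>
      rw [LinearMap.comp_apply, LinearMap.id_apply, hψs, map_smul]
      have : φ (g0 (Quot.mk rel x)) = q (Finsupp.single (cTup x) 1) :=
        Submodule.liftQ_apply B q (Finsupp.single (cTup x) 1)
      rw [this, hqs, cTup_eval, Finsupp.smul_single, smul_eq_mul, mul_one]
  have h2 : ψ.comp φ = LinearMap.id := by
    apply Submodule.linearMap_qext
    apply Finsupp.lhom_ext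
    intro t b
    rw [LinearMap.comp_apply, LinearMap.comp_apply, LinearMap.comp_apply,
      LinearMap.id_apply, Submodule.mkQ_apply, Submodule.liftQ_apply, hqs, hψs]
    have : g0 (Quot.mk rel (t.1 0)) =
        Submodule.Quotient.mk (Finsupp.single (cTup (t.1 0)) (1 : K)) := rfl
    rw [this, cTup_eq, ← Submodule.Quotient.mk_smul, Finsupp.smul_single, smul_eq_mul, mul_one]
  have e1 : ↥(SH K X r I 0) ≃ₗ[K] Hup K X r I 0 := LinearEquiv.ofTop _ hSH
  have e2 : Hup K X r I 0 ≃ₗ[K] (RC K X 0 ⧸ rcBdries K X Rs (lowL I) 0) :=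
    quotTopEquiv K hCtop _
  have e3 : (RC K X 0 ⧸ rcBdries K X Rs (lowL I) 0) ≃ₗ[K] (RC K X 0 ⧸ B) :=
    Submodule.quotEquivOfEq _ _ hBd
  have e4 : (RC K X 0 ⧸ B) ≃ₗ[K] ((Quot rel) →₀ K) := LinearEquiv.ofLinear φ ψ h1 h2
  exact ⟨e1.trans (e2.trans (e3.trans e4))⟩

/-- Description of the `0`-th `r`-spectral homology: if `0 ∈ I`, then
`SH^r_{0,I}(X)` is free on the quotient of `X` by the relation `x ∼ y ⟺ x ∼_s y` for
some `s ∈ I^r = (R_I + r) \ L_I`; in particular `SH^r_{0,{0}}(X) ≅ K·(X/∼_r)`.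
If `0 ∉ I`, then `SH^r_{0,I}(X) = 0`. -/
theorem stmt_17 (K : Type*) [CommRing K] (X : Type*) [QuasiMetric X]
    (r : ℝ) (hr : 0 ≤ r) (I : Set ℝ) (hne : I.Nonempty)
    (hconv : ∀ x y z : ℝ, x ∈ I → z ∈ I → x ≤ y → y ≤ z → y ∈ I) :
    (0 ∈ I → Nonempty (↥(SH K X r I 0) ≃ₗ[K]
      ((Quot fun x y : X => ∃ s ∈ ((· + r) '' lowR I) \ lowL I, PtHomotopic s x y) →₀ K))) ∧
    (0 ∉ I → SH K X r I 0 = ⊥) ∧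
    Nonempty (↥(SH K X r {0} 0) ≃ₗ[K] ((Quot (PtHomotopic (X := X) r)) →₀ K)) := by
  refine ⟨fun h0 => sh_zero_of_mem K X r hr I h0, fun h0 => ?_, ?_⟩
  · by_cases hpos : ∀ i ∈ I, 0 < i
    · have h0L : (0 : ℝ) ∈ lowL I := fun i hi => hpos i hi
      have hLtop : FilL K X (lowL I) 0 = ⊤ := filL_zero_top K ⟨0, h0L, le_rfl⟩
      have hcomap : (rcBdries K X ((· + r) '' lowR I) (lowL I) 0).comap
          (rcCycles K X ((· + r) '' lowR I) (lowL I) 0).subtype = ⊤ := by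
        rw [eq_top_iff]
        intro x _
        rw [Submodule.mem_comap]
        exact Submodule.mem_sup_left
          (Submodule.mem_inf.2 ⟨by rw [hLtop]; trivial, x.2⟩)
      haveI hsub : Subsingleton (Hup K X r I 0) :=
        Submodule.Quotient.subsingleton_iff.2 hcomap
      rw [eq_bot_iff]
      intro x _
      rw [Submodule.mem_bot]
      exact Subsingleton.elim x 0
    · push_neg at hpos
      obtain ⟨i0, hi0I, hi0⟩ := hpos
      have hneg : ∀ s ∈ lowR I, s < 0 := by
        rintro s ⟨j, hjI, hsj⟩
        have hj : j < 0 := by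
          rcases lt_or_ge j 0 with h | h
          · exact h
          · exact absurd (hconv i0 0 j hi0I hjI hi0 h) h0
        exact lt_of_le_of_lt hsj hj
      have hC' : rcCycles K X (lowR I) ((· - r) '' lowL I) 0 = ⊥ := filL_zero_bot K hneg 0
      unfold SH
      rw [hC', Submodule.comap_bot, Submodule.ker_subtype]
      exact Submodule.map_bot _
  · obtain ⟨e⟩ := sh_zero_of_mem K X r hr {0} rfl
    have h12 : ∀ x y : X, (∃ s ∈ ((· + r) '' lowR {0}) \ lowL {0}, PtHomotopic s x y) →
        PtHomotopic r x y := by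
      rintro x y ⟨s, ⟨⟨u, ⟨i, hi, hui⟩, rfl⟩, -⟩, hhom⟩
      have hi0 : i = (0 : ℝ) := hi
      rw [hi0] at hui
      exact ptHomotopic_mono (show u + r ≤ r by linarith) hhom
    have h21 : ∀ x y : X, PtHomotopic r x y →
        (∃ s ∈ ((· + r) '' lowR {0}) \ lowL {0}, PtHomotopic s x y) := by
      intro x y h
      exact ⟨r, ⟨⟨0, ⟨0, rfl, le_rfl⟩, zero_add r⟩,
        fun hL => absurd (hL 0 rfl) (not_lt.2 hr)⟩, h⟩
    have eqv : (Quot fun x y : X => ∃ s ∈ ((· + r) '' lowR {0}) \ lowL {0},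
        PtHomotopic s x y) ≃ Quot (PtHomotopic (X := X) r) :=
      { toFun := Quot.map id (fun a b h => h12 a b h)
        invFun := Quot.map id (fun a b h => h21 a b h)
        left_inv := fun q => Quot.inductionOn q fun x => rfl
        right_inv := fun q => Quot.inductionOn q fun x => rfl }
    exact ⟨e.trans (Finsupp.domLCongr eqv)⟩
end
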